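/- For every convex body C ⊂ ℍ^d, the maximum of width_H(C) over all hyperplanes H supporting C equals the diameter of C. -/

import Mathlib

noncomputable section

namespace HypSpace

/-- Inverse hyperbolic cosine. -/
def arcosh (x : ℝ) : ℝ := Real.log (x + Real.sqrt (x ^ 2 - 1))

/-- The Minkowski bilinear form on `ℝ^{d+1}` (signature `(d,1)`, the last
coordinate being timelike). -/
def mink (d : ℕ) (x y : EuclideanSpace ℝ (Fin (d + 1))) : ℝ :=
  (∑ i : Fin d, x i.castSucc * y i.castSucc) - x (Fin.last d) * y (Fin.last d)

/-- The hyperboloid model of `d`-dimensional hyperbolic space: the upper sheet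
of the two-sheeted hyperboloid `mink x x = -1`. -/
def Pt (d : ℕ) : Type := {x : EuclideanSpace ℝ (Fin (d + 1)) // mink d x x = -1 ∧ 0 < x (Fin.last d)}

variable {d : ℕ}

/-- Hyperbolic distance between two points of `ℍ^d`. -/
def hdist (p q : Pt d) : ℝ := arcosh (-(mink d p.1 q.1))

/-- The geodesic segment between `a` and `b`, described metrically via betweenness
(hyperbolic space is uniquely geodesic). -/
def seg (a b : Pt d) : Set (Pt d) := {p | hdist a p + hdist p b = hdist a b}

/-- A set is (geodesically) convex if it contains the segment between any two of its points. -/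
def IsConvexSet (C : Set (Pt d)) : Prop := ∀ a ∈ C, ∀ b ∈ C, seg a b ⊆ C

/-- The convex hull: the smallest convex set containing `A`. -/
def chull (A : Set (Pt d)) : Set (Pt d) := ⋂₀ {C | IsConvexSet C ∧ A ⊆ C}

/-- The totally geodesic hyperplane with (spacelike) normal vector `v`. -/
def plane (v : EuclideanSpace ℝ (Fin (d + 1))) : Set (Pt d) := {p | mink d v p.1 = 0}

/-- A hyperplane of `ℍ^d`: the trace on the hyperboloid of a linear hyperplane
with spacelike unit normal. -/
def IsHyperplane (H : Set (Pt d)) : Prop := ∃ v, mink d v v = 1 ∧ H = plane v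

/-- Distance from a point to a set. -/
def distPS (p : Pt d) (S : Set (Pt d)) : ℝ := sInf (hdist p '' S)

/-- Distance between two sets. -/
def distSS (A B : Set (Pt d)) : ℝ := sInf {r | ∃ a ∈ A, ∃ b ∈ B, hdist a b = r}

/-- `h` is the orthogonal projection of `g` onto `H`: the point of `H`
realizing the distance from `g` to `H`.  For a hyperplane `H` with `a ∈ H`,
`IsProj b H a` also expresses that `H` is orthogonal to the segment `ab` at `a`. -/
def IsProj (g : Pt d) (H : Set (Pt d)) (h : Pt d) : Prop :=
  h ∈ H ∧ ∀ k ∈ H, hdist g h ≤ hdist g k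

/-- Two hyperplanes are ultraparallel if they are disjoint and not asymptotically
parallel (their distance is positive, i.e. they admit a common perpendicular). -/
def Ultraparallel (H J : Set (Pt d)) : Prop :=
  IsHyperplane H ∧ IsHyperplane J ∧ H ∩ J = ∅ ∧ 0 < distSS H J

/-- `p` is an interior point of `C`. -/
def IsIntr (C : Set (Pt d)) (p : Pt d) : Prop := ∃ ε > 0, ∀ q, hdist p q < ε → q ∈ C

/-- `p` is a boundary point of the (closed) set `C`. -/
def IsBdry (C : Set (Pt d)) (p : Pt d) : Prop := p ∈ C ∧ ¬ IsIntr C p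

/-- `C` is bounded. -/
def IsBddSet (C : Set (Pt d)) : Prop := ∃ R, ∀ a ∈ C, ∀ b ∈ C, hdist a b ≤ R

/-- `C` is closed. -/
def IsClosedSet (C : Set (Pt d)) : Prop :=
  ∀ p : Pt d, (∀ ε > 0, ∃ q ∈ C, hdist p q < ε) → p ∈ C

/-- A convex body: a compact (closed and bounded) convex set with nonempty interior. -/
def IsBody (C : Set (Pt d)) : Prop :=
  IsConvexSet C ∧ IsBddSet C ∧ IsClosedSet C ∧ ∃ p, IsIntr C p

/-- The hyperplane `H` supports `C`: it meets `C` but misses its interior. -/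
def Supports (H C : Set (Pt d)) : Prop :=
  IsHyperplane H ∧ (H ∩ C).Nonempty ∧ ∀ p, IsIntr C p → p ∉ H

/-- The width of `C` determined by `H`, as the maximum distance from `H`
to a point of `C`. -/
def width (H C : Set (Pt d)) : ℝ := sSup ((fun c => distPS c H) '' C)

/-- The width of `C` determined by `H`, as the distance from `H` to a farthest
supporting hyperplane of `C` ultraparallel to `H`. -/
def widthUP (H C : Set (Pt d)) : ℝ :=
  sSup {r | ∃ J, Supports J C ∧ Ultraparallel H J ∧ distSS H J = r}

/-- The thickness of `C`: the minimum width over supporting hyperplanes. -/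
def thickness (C : Set (Pt d)) : ℝ := sInf {r | ∃ H, Supports H C ∧ width H C = r}

/-- The diameter of `C`. -/
def diam (C : Set (Pt d)) : ℝ := sSup {r | ∃ a ∈ C, ∃ b ∈ C, hdist a b = r}

/-- A body of constant width `δ`. -/
def ConstWidth (W : Set (Pt d)) (δ : ℝ) : Prop :=
  IsBody W ∧ ∀ H, Supports H W → width H W = δ

/-- A complete set of diameter `δ`. -/
def CompleteSet (C : Set (Pt d)) (δ : ℝ) : Prop :=
  diam C = δ ∧ ∀ x, x ∉ C → diam (C ∪ {x}) > δ

/-- A body of constant diameter `δ`. -/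
def ConstDiam (C : Set (Pt d)) (δ : ℝ) : Prop :=
  diam C = δ ∧ ∀ p, IsBdry C p → ∃ p' ∈ C, hdist p p' = δ

/-!
A supporting hyperplane meets `C`, so every point of `C` lies within `diam C` of it: no width
exceeds the diameter. Conversely, let `a, b ∈ C` realize the diameter (`C` is compact) and let `H`
be the hyperplane through `b` orthogonal to the geodesic `ab`. Every point of `H` other than `b`
is farther from `a` than `b` is, so an interior point of `C` on `H` could only be `b`; but then
`C` would contain points of the geodesic beyond `b`, farther than `diam C` from `a`. Hence `H`
supports `C`, and its width is at least `dist(a, H) = diam C`.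
-/

section Minkowski

def spatial (x y : EuclideanSpace ℝ (Fin (d + 1))) : ℝ :=
  ∑ i : Fin d, x i.castSucc * y i.castSucc

variable (x y z : EuclideanSpace ℝ (Fin (d + 1)))

lemma mink_eq_spatial : mink d x y = spatial x y - x (Fin.last d) * y (Fin.last d) := rfl

lemma mink_comm : mink d x y = mink d y x := by
  simp only [mink, mul_comm]

lemma mink_add_left : mink d (x + y) z = mink d x z + mink d y z := by
  simp only [mink, PiLp.add_apply, add_mul, Finset.sum_add_distrib]
  ring

lemma mink_sub_left : mink d (x - y) z = mink d x z - mink d y z := by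
  simp only [mink, PiLp.sub_apply, sub_mul, Finset.sum_sub_distrib]
  ring

lemma mink_smul_left (r : ℝ) : mink d (r • x) y = r * mink d x y := by
  simp only [mink, PiLp.smul_apply, smul_eq_mul, Finset.mul_sum, mul_sub, mul_assoc]

lemma mink_add_right : mink d x (y + z) = mink d x y + mink d x z := by
  rw [mink_comm, mink_add_left, mink_comm y, mink_comm z]

lemma mink_sub_right : mink d x (y - z) = mink d x y - mink d x z := by
  rw [mink_comm, mink_sub_left, mink_comm y, mink_comm z]

lemma mink_smul_right (r : ℝ) : mink d x (r • y) = r * mink d x y := by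
  rw [mink_comm, mink_smul_left, mink_comm]

@[fun_prop]
lemma continuous_mink {X : Type*} [TopologicalSpace X]
    {f g : X → EuclideanSpace ℝ (Fin (d + 1))} (hf : Continuous f) (hg : Continuous g) :
    Continuous fun t => mink d (f t) (g t) := by
  unfold mink
  fun_prop

lemma spatial_self_nonneg : 0 ≤ spatial x x :=
  Finset.sum_nonneg fun _ _ => mul_self_nonneg _

lemma sq_spatial_le : spatial x y ^ 2 ≤ spatial x x * spatial y y := by
  simpa only [spatial, sq] using Finset.sum_mul_sq_le_sq_mul_sq Finset.univ
    (fun i : Fin d => x i.castSucc) (fun i => y i.castSucc)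

lemma norm_sq_eq_spatial : ‖x‖ ^ 2 = spatial x x + x (Fin.last d) ^ 2 := by
  rw [EuclideanSpace.norm_sq_eq, Fin.sum_univ_castSucc]
  simp only [Real.norm_eq_abs, sq_abs, spatial, ← sq]

lemma eq_zero_of_spatial_self_eq_zero {x : EuclideanSpace ℝ (Fin (d + 1))}
    (hs : spatial x x = 0) (hl : x (Fin.last d) = 0) : x = 0 := by
  have hcoord := (Finset.sum_eq_zero_iff_of_nonneg fun i _ => mul_self_nonneg (x i.castSucc)).1 hs
  ext i
  induction i using Fin.lastCases with
  | last => exact hl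
  | cast i => exact mul_self_eq_zero.1 (hcoord i (Finset.mem_univ i))

variable {x y}

lemma last_sq_eq (hx : mink d x x = -1) : x (Fin.last d) ^ 2 = 1 + spatial x x := by
  rw [mink_eq_spatial] at hx
  linarith

/-- Reverse Cauchy–Schwarz inequality on the two-sheeted hyperboloid. -/
lemma abs_spatial_le (hx : mink d x x = -1) (hy : mink d y y = -1) :
    |spatial x y| ≤ |x (Fin.last d) * y (Fin.last d)| - 1 := by
  have hx2 := last_sq_eq hx
  have hy2 := last_sq_eq hy
  have hsx := spatial_self_nonneg x
  have hsy := spatial_self_nonneg y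
  have habs : |x (Fin.last d) * y (Fin.last d)| = |x (Fin.last d)| * |y (Fin.last d)| := abs_mul _ _
  have hax : 1 ≤ |x (Fin.last d)| := by
    nlinarith [sq_abs (x (Fin.last d)), abs_nonneg (x (Fin.last d))]
  have hay : 1 ≤ |y (Fin.last d)| := by
    nlinarith [sq_abs (y (Fin.last d)), abs_nonneg (y (Fin.last d))]
  apply abs_le_of_sq_le_sq _ (by nlinarith)
  calc spatial x y ^ 2 ≤ spatial x x * spatial y y := sq_spatial_le x y
    _ ≤ (|x (Fin.last d) * y (Fin.last d)| - 1) ^ 2 := by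
      rw [habs]
      nlinarith [sq_abs (x (Fin.last d)), sq_abs (y (Fin.last d)),
        sq_nonneg (|x (Fin.last d)| - |y (Fin.last d)|)]

end Minkowski

section Hyperboloid

lemma one_le_last (p : Pt d) : 1 ≤ p.1 (Fin.last d) := by
  nlinarith [last_sq_eq p.2.1, spatial_self_nonneg p.1, p.2.2]

lemma one_le_neg_mink (p q : Pt d) : 1 ≤ -mink d p.1 q.1 := by
  have h := abs_spatial_le p.2.1 q.2.1
  rw [abs_of_pos (mul_pos p.2.2 q.2.2)] at h
  rw [mink_eq_spatial]
  linarith [le_abs_self (spatial p.1 q.1)]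

lemma eq_of_neg_mink_eq_one {p q : Pt d} (h : -mink d p.1 q.1 = 1) : p = q := by
  have hp2 := last_sq_eq p.2.1
  have hq2 := last_sq_eq q.2.1
  have hpq := mink_eq_spatial p.1 q.1
  have hlast : p.1 (Fin.last d) = q.1 (Fin.last d) := by
    nlinarith [sq_spatial_le p.1 q.1, sq_nonneg (p.1 (Fin.last d) - q.1 (Fin.last d))]
  have hnull : mink d (p.1 - q.1) (p.1 - q.1) = 0 := by
    rw [mink_sub_left, mink_sub_right, mink_sub_right, p.2.1, q.2.1, mink_comm q.1]
    linarith
  rw [mink_eq_spatial, PiLp.sub_apply, hlast, sub_self, mul_zero, sub_zero] at hnull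
  exact Subtype.ext (sub_eq_zero.1 (eq_zero_of_spatial_self_eq_zero hnull
    (by rw [PiLp.sub_apply, hlast, sub_self])))

lemma last_pos_of_neg_mink_pos (p : Pt d) {x : EuclideanSpace ℝ (Fin (d + 1))}
    (hx : mink d x x = -1) (h : 0 < -mink d p.1 x) : 0 < x (Fin.last d) := by
  by_contra! hneg
  have hS := abs_spatial_le p.2.1 hx
  have hx2 := last_sq_eq hx
  have hneg' : x (Fin.last d) < 0 := by nlinarith [spatial_self_nonneg x]
  rw [abs_of_neg (mul_neg_of_pos_of_neg p.2.2 hneg')] at hS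
  rw [mink_eq_spatial] at h
  linarith [neg_abs_le (spatial p.1 x)]

lemma hdist_eq_arcosh (p q : Pt d) : hdist p q = Real.arcosh (-mink d p.1 q.1) := rfl

lemma hdist_nonneg (p q : Pt d) : 0 ≤ hdist p q :=
  Real.arcosh_nonneg (one_le_neg_mink p q)

lemma cosh_hdist (p q : Pt d) : Real.cosh (hdist p q) = -mink d p.1 q.1 :=
  Real.cosh_arcosh (one_le_neg_mink p q)

lemma hdist_self (p : Pt d) : hdist p p = 0 := by
  rw [hdist_eq_arcosh, p.2.1, neg_neg, Real.arcosh_zero]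

lemma hdist_le_iff {p q : Pt d} {r : ℝ} (hr : 0 ≤ r) :
    hdist p q ≤ r ↔ -mink d p.1 q.1 ≤ Real.cosh r := by
  rw [hdist_eq_arcosh, ← Real.arcosh_le_arcosh (by linarith [one_le_neg_mink p q])
    (Real.cosh_pos r), Real.arcosh_cosh hr]

lemma hdist_lt_iff {p q : Pt d} {r : ℝ} (hr : 0 ≤ r) :
    hdist p q < r ↔ -mink d p.1 q.1 < Real.cosh r := by
  rw [hdist_eq_arcosh, ← Real.arcosh_lt_arcosh (by linarith [one_le_neg_mink p q])
    (Real.cosh_pos r), Real.arcosh_cosh hr]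

lemma le_hdist_iff {p q : Pt d} {r : ℝ} (hr : 0 ≤ r) :
    r ≤ hdist p q ↔ Real.cosh r ≤ -mink d p.1 q.1 := by
  simpa only [not_lt] using (hdist_lt_iff hr).not

end Hyperboloid

section WidthDiam

variable {C H : Set (Pt d)} {p q : Pt d}

lemma IsIntr.mem (h : IsIntr C p) : p ∈ C :=
  let ⟨_, hε, hball⟩ := h
  hball p (by rwa [hdist_self])

lemma diam_nonneg : 0 ≤ diam C :=
  Real.sSup_nonneg <| by rintro _ ⟨p, -, q, -, rfl⟩; exact hdist_nonneg p q

lemma hdist_le_diam (hC : IsBddSet C) (hp : p ∈ C) (hq : q ∈ C) : hdist p q ≤ diam C :=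
  let ⟨R, hR⟩ := hC
  le_csSup ⟨R, by rintro _ ⟨p, hp, q, hq, rfl⟩; exact hR p hp q hq⟩ ⟨p, hp, q, hq, rfl⟩

lemma distPS_nonneg : 0 ≤ distPS p H :=
  Real.sInf_nonneg <| by rintro _ ⟨q, -, rfl⟩; exact hdist_nonneg p q

lemma distPS_le_hdist (hq : q ∈ H) : distPS p H ≤ hdist p q :=
  csInf_le ⟨0, by rintro _ ⟨q, -, rfl⟩; exact hdist_nonneg p q⟩ ⟨q, hq, rfl⟩

lemma distPS_le_diam (hC : IsBddSet C) (hHC : (H ∩ C).Nonempty) (hp : p ∈ C) :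
    distPS p H ≤ diam C :=
  let ⟨_, hqH, hqC⟩ := hHC
  (distPS_le_hdist hqH).trans (hdist_le_diam hC hp hqC)

lemma width_nonneg : 0 ≤ width H C :=
  Real.sSup_nonneg <| by rintro _ ⟨c, -, rfl⟩; exact distPS_nonneg

lemma width_le_diam (hC : IsBddSet C) (hHC : (H ∩ C).Nonempty) : width H C ≤ diam C :=
  Real.sSup_le (by rintro _ ⟨c, hc, rfl⟩; exact distPS_le_diam hC hHC hc) diam_nonneg

lemma distPS_le_width (hC : IsBddSet C) (hHC : (H ∩ C).Nonempty) (hp : p ∈ C) :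
    distPS p H ≤ width H C :=
  le_csSup ⟨diam C, by rintro _ ⟨c, hc, rfl⟩; exact distPS_le_diam hC hHC hc⟩
    ⟨p, hp, rfl⟩

end WidthDiam

/-- Unit tangent vectors at `b`, which are also the unit normals of hyperplanes through `b`. -/
structure UnitTangent (b : Pt d) where
  vec : EuclideanSpace ℝ (Fin (d + 1))
  mink_self : mink d vec vec = 1
  mink_base : mink d vec b.1 = 0

namespace UnitTangent

variable {b : Pt d} (u : UnitTangent b)

lemma base_mem_plane : b ∈ plane u.vec := u.mink_base

def geodVec (t : ℝ) : EuclideanSpace ℝ (Fin (d + 1)) :=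
  Real.cosh t • b.1 + Real.sinh t • u.vec

lemma geodVec_zero : u.geodVec 0 = b.1 := by
  simp [geodVec]

lemma mink_geodVec (s t : ℝ) : mink d (u.geodVec s) (u.geodVec t) = -Real.cosh (s - t) := by
  simp only [geodVec, mink_add_left, mink_add_right, mink_smul_left, mink_smul_right, b.2.1,
    u.mink_self, u.mink_base, mink_comm b.1 u.vec]
  rw [Real.cosh_sub]
  ring

def geod (t : ℝ) : Pt d :=
  have hself : mink d (u.geodVec t) (u.geodVec t) = -1 := by simpa using u.mink_geodVec t t
  ⟨u.geodVec t, hself, last_pos_of_neg_mink_pos b hself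
    (by rw [← u.geodVec_zero, u.mink_geodVec, neg_neg]; exact Real.cosh_pos _)⟩

lemma geod_zero : u.geod 0 = b :=
  Subtype.ext u.geodVec_zero

lemma hdist_geod (s t : ℝ) : hdist (u.geod s) (u.geod t) = |s - t| := by
  rw [hdist_eq_arcosh, geod, geod, u.mink_geodVec, neg_neg, ← Real.cosh_abs,
    Real.arcosh_cosh (abs_nonneg _)]

lemma hdist_geod_base (t : ℝ) : hdist (u.geod t) b = |t| := by
  simpa only [u.geod_zero, sub_zero] using u.hdist_geod t 0

lemma hdist_base_geod (t : ℝ) : hdist b (u.geod t) = |t| := by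
  simpa only [u.geod_zero, zero_sub, abs_neg] using u.hdist_geod 0 t

lemma neg_mink_geod_of_mem_plane (t : ℝ) {p : Pt d} (hp : p ∈ plane u.vec) :
    -mink d (u.geod t).1 p.1 = Real.cosh t * -mink d b.1 p.1 := by
  have hp' : mink d u.vec p.1 = 0 := hp
  simp only [geod, geodVec, mink_add_left, mink_smul_left, hp']
  ring

lemma le_hdist_geod_of_mem_plane {t : ℝ} (ht : 0 ≤ t) {p : Pt d} (hp : p ∈ plane u.vec) :
    t ≤ hdist (u.geod t) p := by
  rw [le_hdist_iff ht, u.neg_mink_geod_of_mem_plane t hp]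
  exact le_mul_of_one_le_right (Real.cosh_pos t).le (one_le_neg_mink b p)

lemma eq_base_of_hdist_geod_le {t : ℝ} (ht : 0 ≤ t) {p : Pt d} (hp : p ∈ plane u.vec)
    (h : hdist (u.geod t) p ≤ t) : p = b := by
  rw [hdist_le_iff ht, u.neg_mink_geod_of_mem_plane t hp] at h
  have h1 : -mink d b.1 p.1 ≤ 1 := by nlinarith [Real.cosh_pos t]
  exact (eq_of_neg_mink_eq_one (le_antisymm h1 (one_le_neg_mink b p))).symm

lemma distPS_geod_plane {t : ℝ} (ht : 0 ≤ t) : distPS (u.geod t) (plane u.vec) = t := by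
  refine le_antisymm ?_ (le_csInf ⟨_, b, u.base_mem_plane, rfl⟩ ?_)
  · calc distPS (u.geod t) (plane u.vec) ≤ hdist (u.geod t) b :=
          distPS_le_hdist u.base_mem_plane
      _ = t := by rw [u.hdist_geod_base, abs_of_nonneg ht]
  · rintro _ ⟨p, hp, rfl⟩
    exact u.le_hdist_geod_of_mem_plane ht hp

end UnitTangent

lemma exists_unitTangent_geod_eq {a b : Pt d} (hab : a ≠ b) :
    ∃ u : UnitTangent b, u.geod (hdist a b) = a := by
  set D := hdist a b
  have hD : 0 < D := Real.arcosh_pos <| (one_le_neg_mink a b).lt_of_ne fun h =>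
    hab (eq_of_neg_mink_eq_one h.symm)
  have hsinh : 0 < Real.sinh D := Real.sinh_pos_iff.2 hD
  have hcosh : -mink d a.1 b.1 = Real.cosh D := (cosh_hdist a b).symm
  set v := (Real.sinh D)⁻¹ • (a.1 - Real.cosh D • b.1)
  have hvb : mink d v b.1 = 0 := by
    simp only [v, mink_smul_left, mink_sub_left, b.2.1]
    rw [← neg_neg (mink d a.1 b.1), hcosh]
    ring
  have hvv : mink d v v = 1 := by
    simp only [v, mink_smul_left, mink_smul_right, mink_sub_left, mink_sub_right, a.2.1, b.2.1,
      mink_comm b.1 a.1]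
    rw [← neg_neg (mink d a.1 b.1), hcosh]
    field_simp
    nlinarith [Real.cosh_sq_sub_sinh_sq D]
  refine ⟨⟨v, hvv, hvb⟩, Subtype.ext ?_⟩
  change Real.cosh D • b.1 + Real.sinh D • v = a.1
  rw [smul_smul, mul_inv_cancel₀ hsinh.ne', one_smul, add_sub_cancel]

section Compactness

variable {C : Set (Pt d)}

lemma norm_le_two_mul_last (p : Pt d) : ‖p.1‖ ≤ 2 * p.1 (Fin.last d) := by
  have h := norm_sq_eq_spatial p.1
  have h2 := last_sq_eq p.2.1
  exact le_of_sq_le_sq (by nlinarith) (by linarith [p.2.2])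

lemma last_le_of_neg_mink (p q : Pt d) :
    q.1 (Fin.last d) ≤ 2 * p.1 (Fin.last d) * -mink d p.1 q.1 := by
  set tp := p.1 (Fin.last d)
  set tq := q.1 (Fin.last d)
  set S := spatial p.1 q.1
  have hp2 := last_sq_eq p.2.1
  have hq2 := last_sq_eq q.2.1
  have htp := one_le_last p
  have htq := q.2.2
  have hS : S ^ 2 ≤ (tp ^ 2 - 1) * tq ^ 2 := by
    nlinarith [sq_spatial_le p.1 q.1, spatial_self_nonneg p.1, spatial_self_nonneg q.1]
  have hS' : 2 * tp * S ≤ (2 * tp ^ 2 - 1) * tq := by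
    refine le_of_sq_le_sq ?_ (by nlinarith)
    nlinarith [sq_nonneg tq]
  rw [mink_eq_spatial]
  nlinarith

lemma isBounded_val_image (hC : IsBddSet C) : Bornology.IsBounded (Subtype.val '' C) := by
  rcases C.eq_empty_or_nonempty with rfl | ⟨p₀, hp₀⟩
  · exact Bornology.isBounded_empty.subset (Set.image_empty _).le
  obtain ⟨R, hR⟩ := hC
  have hR0 : 0 ≤ R := hdist_self p₀ ▸ hR p₀ hp₀ p₀ hp₀
  refine isBounded_iff_forall_norm_le.2 ⟨4 * p₀.1 (Fin.last d) * Real.cosh R, ?_⟩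
  rintro _ ⟨q, hq, rfl⟩
  have hmink := (hdist_le_iff hR0).1 (hR p₀ hp₀ q hq)
  nlinarith [norm_le_two_mul_last q, last_le_of_neg_mink p₀ q, p₀.2.2]

lemma isClosed_val_image (hC : IsClosedSet C) : IsClosed (Subtype.val '' C) := by
  refine closure_subset_iff_isClosed.1 fun x hx => ?_
  have hxx : mink d x x = -1 :=
    closure_minimal (t := {x | mink d x x = -1}) (by rintro _ ⟨p, -, rfl⟩; exact p.2.1)
      (isClosed_eq (by fun_prop) continuous_const) hx
  have hlast : 1 ≤ x (Fin.last d) :=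
    closure_minimal (t := {x : EuclideanSpace ℝ (Fin (d + 1)) | 1 ≤ x (Fin.last d)})
      (by rintro _ ⟨p, -, rfl⟩; exact one_le_last p)
      (isClosed_le continuous_const (by fun_prop)) hx
  let p : Pt d := ⟨x, hxx, by linarith⟩
  refine ⟨p, hC p fun ε hε => ?_, rfl⟩
  have hnhds : {y | -mink d x y < Real.cosh ε} ∈ nhds x :=
    (isOpen_lt (by fun_prop) continuous_const).mem_nhds
      (by simpa [hxx] using Real.one_lt_cosh.2 hε.ne')
  obtain ⟨_, hy, q, hq, rfl⟩ := mem_closure_iff_nhds.1 hx _ hnhds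
  exact ⟨q, hq, (hdist_lt_iff hε.le).2 hy⟩

lemma exists_hdist_isMax (hne : C.Nonempty) (hbd : IsBddSet C) (hcl : IsClosedSet C) :
    ∃ a ∈ C, ∃ b ∈ C, ∀ p ∈ C, ∀ q ∈ C, hdist p q ≤ hdist a b := by
  have hK := Metric.isCompact_of_isClosed_isBounded (isClosed_val_image hcl)
    (isBounded_val_image hbd)
  obtain ⟨⟨_, _⟩, ⟨⟨(a : Pt d), ha, rfl⟩, ⟨(b : Pt d), hb, rfl⟩⟩, hmax⟩ :=
    (hK.prod hK).exists_isMaxOn ((hne.image _).prod (hne.image _))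
      (f := fun xy => -mink d xy.1 xy.2) (by fun_prop : Continuous _).continuousOn
  refine ⟨a, ha, b, hb, fun p hp q hq => ?_⟩
  rw [hdist_le_iff (hdist_nonneg a b), cosh_hdist]
  exact hmax (Set.mk_mem_prod ⟨p, hp, rfl⟩ ⟨q, hq, rfl⟩)

end Compactness

lemma UnitTangent.supports_plane {C : Set (Pt d)} {b : Pt d} (u : UnitTangent b)
    {t : ℝ} (ht : 0 ≤ t) (hb : b ∈ C) (hfar : ∀ p ∈ C, hdist (u.geod t) p ≤ t) :
    Supports (plane u.vec) C := by
  refine ⟨⟨u.vec, u.mink_self, rfl⟩, ⟨b, u.base_mem_plane, hb⟩, ?_⟩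
  rintro p hp hpH
  obtain rfl : p = b := u.eq_base_of_hdist_geod_le ht hpH (hfar p hp.mem)
  obtain ⟨ε, hε, hball⟩ := hp
  -- the geodesic continues past the interior point `b` inside `C`, getting farther than `t`
  have hq : u.geod (-(ε / 2)) ∈ C :=
    hball _ (by rw [u.hdist_base_geod, abs_neg, abs_of_pos (half_pos hε)]; exact half_lt_self hε)
  have hfar' := hfar _ hq
  rw [u.hdist_geod, sub_neg_eq_add, abs_of_pos (by positivity)] at hfar'
  linarith

lemma exists_supports_width_eq_diam {C : Set (Pt d)} (hC : IsBody C)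
    (hpos : 0 < diam C) : ∃ H, Supports H C ∧ width H C = diam C := by
  obtain ⟨-, hbd, hcl, p₀, hp₀⟩ := hC
  obtain ⟨a, ha, b, hb, hmax⟩ := exists_hdist_isMax ⟨p₀, hp₀.mem⟩ hbd hcl
  have hdiam : diam C = hdist a b :=
    le_antisymm (Real.sSup_le (by rintro _ ⟨p, hp, q, hq, rfl⟩; exact hmax p hp q hq)
      (hdist_nonneg a b)) (hdist_le_diam hbd ha hb)
  have hab : a ≠ b := by
    rintro rfl
    rw [hdiam, hdist_self] at hpos
    exact hpos.false
  obtain ⟨u, hu⟩ := exists_unitTangent_geod_eq hab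
  have hfar : ∀ p ∈ C, hdist (u.geod (hdist a b)) p ≤ hdist a b := by
    rw [hu]
    exact hmax a ha
  have hsupp : Supports (plane u.vec) C := u.supports_plane (hdist_nonneg a b) hb hfar
  refine ⟨plane u.vec, hsupp, le_antisymm (width_le_diam hbd hsupp.2.1) ?_⟩
  calc diam C = distPS (u.geod (hdist a b)) (plane u.vec) := by
        rw [u.distPS_geod_plane (hdist_nonneg a b), hdiam]
    _ ≤ width (plane u.vec) C := distPS_le_width hbd hsupp.2.1 (by rwa [hu])

/-- Theorem 1: the maximum width over supporting hyperplanes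
equals the diameter. -/
theorem max_width_eq_diam {d : ℕ} (C : Set (Pt d)) (hC : IsBody C) :
    sSup {r | ∃ H, Supports H C ∧ width H C = r} = diam C := by
  have hle : ∀ r ∈ {r | ∃ H, Supports H C ∧ width H C = r}, r ≤ diam C := by
    rintro _ ⟨H, hH, rfl⟩
    exact width_le_diam hC.2.1 hH.2.1
  refine le_antisymm (Real.sSup_le hle diam_nonneg) ?_
  rcases diam_nonneg.eq_or_lt with h0 | hpos
  · exact h0 ▸ Real.sSup_nonneg (by rintro _ ⟨H, -, rfl⟩; exact width_nonneg)
  · obtain ⟨H, hH, hw⟩ := exists_supports_width_eq_diam hC hpos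
    exact le_csSup ⟨_, hle⟩ ⟨H, hH, hw⟩

end HypSpace
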